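/- Let n ≥ 2, k ∈ {1,…,n−1}, and −∞ < a_i < b_i < ∞ for i = 1,…,n−k; set D = ℝ^k × ∏_{i=1}^{n−k}(a_i,b_i) ⊆ ℝⁿ. Let X(D) and Y(D) be rearrangement-invariant Banach function spaces over D such that the canonical embedding I: W_0^1X(D) ↪ Y(D) is bounded. If Y(D) has absolutely continuous norm, then e_m(I) = ‖I‖ for every m ∈ ℕ; that is, the embedding I is maximally noncompact. -/

import Mathlib

open MeasureTheory ENNReal NNReal Set Filter Topology

noncomputable section

/-- A Banach function norm over the measure space `(α, μ)`: a functional `ρ` on nonnegative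
(extended-real-valued) measurable functions satisfying the norm axioms, the lattice property,
the Fatou property, finiteness on indicators of sets of finite measure, and the local
integrability axiom. -/
structure BanachFunctionNorm (α : Type*) [MeasurableSpace α] (μ : Measure α) where
  /-- the functional `ρ : M⁺ → [0,∞]` -/
  ρ : (α → ℝ≥0∞) → ℝ≥0∞
  eq_zero_iff : ∀ f : α → ℝ≥0∞, Measurable f → (ρ f = 0 ↔ f =ᵐ[μ] 0)
  smul : ∀ (f : α → ℝ≥0∞) (c : ℝ≥0), Measurable f → ρ (fun x => (c : ℝ≥0∞) * f x) = (c : ℝ≥0∞) * ρ f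
  add_le : ∀ f g : α → ℝ≥0∞, Measurable f → Measurable g → ρ (f + g) ≤ ρ f + ρ g
  mono : ∀ f g : α → ℝ≥0∞, Measurable f → Measurable g → (∀ᵐ x ∂μ, g x ≤ f x) → ρ g ≤ ρ f
  fatou : ∀ (F : ℕ → α → ℝ≥0∞) (f : α → ℝ≥0∞), (∀ j, Measurable (F j)) → Measurable f →
    (∀ᵐ x ∂μ, Monotone fun j => F j x) → (∀ᵐ x ∂μ, (⨆ j, F j x) = f x) →
    ρ f = ⨆ j, ρ (F j)
  indicator_lt_top : ∀ E : Set α, MeasurableSet E → μ E < ∞ → ρ (E.indicator 1) < ∞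
  setIntegral_le : ∀ E : Set α, MeasurableSet E → μ E < ∞ → ∃ C : ℝ≥0∞, C < ∞ ∧
    ∀ f : α → ℝ≥0∞, Measurable f → ∫⁻ x in E, f x ∂μ ≤ C * ρ f

/-- A Banach function norm is rearrangement invariant if it takes the same value on
equimeasurable functions. -/
def BanachFunctionNorm.RearrangementInvariant {α : Type*} [MeasurableSpace α]
    {μ : Measure α} (X : BanachFunctionNorm α μ) : Prop :=
  ∀ f g : α → ℝ≥0∞, Measurable f → Measurable g →
    (∀ t : ℝ≥0∞, 0 < t → μ {x | t < f x} = μ {x | t < g x}) → X.ρ f = X.ρ g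

/-- The Banach function space determined by `X` has absolutely continuous norm:
`‖f χ_{E_k}‖ → 0` for every `f` in the space and every sequence of measurable sets `E_k`
whose indicator functions tend to `0` a.e. -/
def BanachFunctionNorm.HasAbsolutelyContinuousNorm {α : Type*} [MeasurableSpace α]
    {μ : Measure α} (X : BanachFunctionNorm α μ) : Prop :=
  ∀ f : α → ℝ≥0∞, Measurable f → X.ρ f < ∞ →
    ∀ E : ℕ → Set α, (∀ j, MeasurableSet (E j)) → (∀ᵐ x ∂μ, ∀ᶠ j in atTop, x ∉ E j) →
    Tendsto (fun j => X.ρ ((E j).indicator f)) atTop (𝓝 0)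

end

noncomputable section

/-- The `i`-th partial derivative of `u : ℝⁿ → ℝ`. -/
def pder {n : ℕ} (i : Fin n) (u : (Fin n → ℝ) → ℝ) (x : Fin n → ℝ) : ℝ :=
  fderiv ℝ u x (Pi.single i 1)

/-- `u` is a smooth function compactly supported in the open set `D`. -/
def IsTestFun {n : ℕ} (D : Set (Fin n → ℝ)) (u : (Fin n → ℝ) → ℝ) : Prop :=
  ContDiff ℝ (⊤ : ℕ∞) u ∧ HasCompactSupport u ∧ tsupport u ⊆ D

/-- The strip-like domain `ℝᵏ × ∏_{i ≥ k} (aᵢ, bᵢ)`, realized as a subset of `ℝⁿ`: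
the coordinates `i < k` are free, the coordinates `i ≥ k` are constrained to `(aᵢ, bᵢ)`. -/
def stripDomain (n k : ℕ) (a b : Fin n → ℝ) : Set (Fin n → ℝ) :=
  {x | ∀ i : Fin n, k ≤ (i : ℕ) → x i ∈ Set.Ioo (a i) (b i)}

/-- The `W¹X`-norm `‖u‖_X + ‖ |∇u|_{ℓ¹} ‖_X` of a (test) function `u`. -/
def W1Xnorm {n : ℕ} {μ : MeasureTheory.Measure (Fin n → ℝ)}
    (X : BanachFunctionNorm (Fin n → ℝ) μ) (u : (Fin n → ℝ) → ℝ) : ℝ≥0∞ :=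
  X.ρ (fun x => ENNReal.ofReal |u x|) +
    X.ρ (fun x => ENNReal.ofReal (∑ i : Fin n, |pder i u x|))

lemma MNC.restrict_translate {n : ℕ} (D : Set (Fin n → ℝ)) (c : Fin n → ℝ)
    (hD : ∀ x, x - c ∈ D ↔ x ∈ D) (S : Set (Fin n → ℝ)) (hS : MeasurableSet S) :
    (volume.restrict D) ((fun x => x - c) ⁻¹' S) = (volume.restrict D) S := by
  have hm : Measurable (fun x : Fin n → ℝ => x - c) := measurable_id.sub measurable_const
  rw [Measure.restrict_apply (hm hS), Measure.restrict_apply hS]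
  have h2 : (fun x : Fin n → ℝ => x - c) ⁻¹' S ∩ D = (fun x => x - c) ⁻¹' (S ∩ D) := by
    ext x
    simp only [Set.mem_inter_iff, Set.mem_preimage]
    exact and_congr_right fun _ => (hD x).symm
  rw [h2]
  have h3 : (fun x : Fin n → ℝ => x - c) = (fun x => -c + x) := by
    funext x; exact sub_eq_neg_add x c
  rw [h3]
  exact measure_preimage_add volume (-c) _

lemma MNC.pder_translate {n : ℕ} (u : (Fin n → ℝ) → ℝ) (hu : ContDiff ℝ (⊤ : ℕ∞) u)
    (c : Fin n → ℝ) (i : Fin n) (x : Fin n → ℝ) :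
    pder i (fun y => u (y - c)) x = pder i u (x - c) := by
  have h1 : HasFDerivAt u (fderiv ℝ u (x - c)) (x - c) :=
    (hu.differentiable (by simp) (x - c)).hasFDerivAt
  have h2 : HasFDerivAt (fun y : Fin n → ℝ => y - c)
      (ContinuousLinearMap.id ℝ (Fin n → ℝ)) x := (hasFDerivAt_id x).sub_const c
  have h3 : HasFDerivAt (fun y => u (y - c))
      ((fderiv ℝ u (x - c)).comp (ContinuousLinearMap.id ℝ (Fin n → ℝ))) x := h1.comp x h2
  unfold pder
  rw [h3.fderiv]
  simp

lemma MNC.tsupport_translate_subset {n : ℕ} (u : (Fin n → ℝ) → ℝ) (c : Fin n → ℝ) :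
    tsupport (fun x => u (x - c)) ⊆ (fun x : Fin n → ℝ => x - c) ⁻¹' tsupport u := by
  apply closure_minimal
  · exact fun x hx => subset_closure hx
  · exact (isClosed_tsupport u).preimage (continuous_id.sub continuous_const)

lemma MNC.rho_translate {n : ℕ} {D : Set (Fin n → ℝ)}
    (Z : BanachFunctionNorm (Fin n → ℝ) (volume.restrict D))
    (hZ : Z.RearrangementInvariant) (c : Fin n → ℝ) (hD : ∀ x, x - c ∈ D ↔ x ∈ D)
    (F : (Fin n → ℝ) → ℝ≥0∞) (hF : Measurable F) :
    Z.ρ (fun x => F (x - c)) = Z.ρ F := by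
  have hm : Measurable fun x : Fin n → ℝ => x - c := measurable_id.sub measurable_const
  refine hZ _ _ (hF.comp hm) hF (fun t _ => ?_)
  have h1 : {x | t < F (x - c)} = (fun x : Fin n → ℝ => x - c) ⁻¹' {x | t < F x} := rfl
  rw [h1, MNC.restrict_translate D c hD _ (measurableSet_lt measurable_const hF)]

lemma MNC.stripDomain_translate {n k : ℕ} (hk1 : 1 ≤ k) (a b : Fin n → ℝ) (i0 : Fin n)
    (h0 : (i0 : ℕ) = 0) (t : ℝ) (x : Fin n → ℝ) :
    x - Pi.single i0 t ∈ stripDomain n k a b ↔ x ∈ stripDomain n k a b := by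
  unfold stripDomain
  constructor <;> intro h i hi <;>
  · have hne : i ≠ i0 := by
      intro e; rw [e, h0] at hi; omega
    have hh := h i hi
    simpa [Pi.sub_apply, Pi.single_eq_of_ne hne] using hh

lemma MNC.isTestFun_translate {n : ℕ} {D : Set (Fin n → ℝ)} {u : (Fin n → ℝ) → ℝ}
    (hu : IsTestFun D u) (c : Fin n → ℝ) (hD : ∀ x, x - c ∈ D ↔ x ∈ D) :
    IsTestFun D (fun x => u (x - c)) := by
  obtain ⟨h1, h2, h3⟩ := hu
  refine ⟨h1.comp (contDiff_id.sub contDiff_const), ?_, ?_⟩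
  · have := h2.comp_homeomorph (Homeomorph.subRight c)
    exact this
  · exact (MNC.tsupport_translate_subset u c).trans (fun x hx => (hD x).1 (h3 hx))

lemma MNC.key {n k : ℕ} (hk1 : 1 ≤ k) (hk : k < n) (a b : Fin n → ℝ)
    (X Y : BanachFunctionNorm (Fin n → ℝ)
      ((volume : Measure (Fin n → ℝ)).restrict (stripDomain n k a b)))
    (hXri : X.RearrangementInvariant) (hYri : Y.RearrangementInvariant)
    (hYac : Y.HasAbsolutelyContinuousNorm)
    {N : ℕ} (g : Fin N → ((Fin n → ℝ) → ℝ)) (hg : ∀ j, Measurable (g j))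
    (ε : ℝ≥0∞)
    (hcov : ∀ u : (Fin n → ℝ) → ℝ, IsTestFun (stripDomain n k a b) u → W1Xnorm X u ≤ 1 →
      ∃ j, Y.ρ (fun x => ENNReal.ofReal |u x - g j x|) ≤ ε)
    (u : (Fin n → ℝ) → ℝ) (hu : IsTestFun (stripDomain n k a b) u)
    (hu1 : W1Xnorm X u ≤ 1) :
    Y.ρ (fun x => ENNReal.ofReal |u x|) ≤ ε := by
  rcases eq_or_ne ε ⊤ with rfl | hε
  · exact le_top
  have hn : 0 < n := lt_of_le_of_lt (Nat.zero_le k) hk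
  set i0 : Fin n := ⟨0, hn⟩ with hi0
  have h0 : (i0 : ℕ) = 0 := rfl
  set c : ℕ → (Fin n → ℝ) := fun t => Pi.single i0 (t : ℝ) with hc
  have hD : ∀ t : ℕ, ∀ x, x - c t ∈ stripDomain n k a b ↔ x ∈ stripDomain n k a b := fun t x =>
    MNC.stripDomain_translate hk1 a b i0 h0 (t : ℝ) x
  have hcu : Continuous u := hu.1.continuous
  -- translates are test functions with norm ≤ 1
  have huT : ∀ t : ℕ, IsTestFun (stripDomain n k a b) (fun x => u (x - c t)) := fun t =>
    MNC.isTestFun_translate hu (c t) (hD t)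
  have hFmeas : Measurable (fun x => ENNReal.ofReal |u x|) :=
    hcu.measurable.abs.ennreal_ofReal
  have hGcont : Continuous (fun x => ∑ i : Fin n, |pder i u x|) := by
    apply continuous_finset_sum
    intro i _
    exact ((hu.1.continuous_fderiv (by simp)).clm_apply continuous_const).abs
  have hGmeas : Measurable (fun x => ENNReal.ofReal (∑ i : Fin n, |pder i u x|)) :=
    hGcont.measurable.ennreal_ofReal
  have hW : ∀ t : ℕ, W1Xnorm X (fun x => u (x - c t)) ≤ 1 := by
    intro t
    have e1 : X.ρ (fun x => ENNReal.ofReal |u (x - c t)|)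
        = X.ρ (fun x => ENNReal.ofReal |u x|) :=
      MNC.rho_translate X hXri (c t) (hD t) _ hFmeas
    have e2 : X.ρ (fun x => ENNReal.ofReal (∑ i : Fin n, |pder i (fun y => u (y - c t)) x|))
        = X.ρ (fun x => ENNReal.ofReal (∑ i : Fin n, |pder i u x|)) := by
      have heq : (fun x => ENNReal.ofReal (∑ i : Fin n, |pder i (fun y => u (y - c t)) x|))
          = fun x => (fun z => ENNReal.ofReal (∑ i : Fin n, |pder i u z|)) (x - c t) := by
        funext x
        simp only [MNC.pder_translate u hu.1 (c t)]
      rw [heq]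
      exact MNC.rho_translate X hXri (c t) (hD t) _ hGmeas
    calc W1Xnorm X (fun x => u (x - c t))
        = W1Xnorm X u := by rw [W1Xnorm, W1Xnorm, e1, e2]
      _ ≤ 1 := hu1
  -- choose covering centers
  have hch : ∀ t : ℕ, ∃ j, Y.ρ (fun x => ENNReal.ofReal |u (x - c t) - g j x|) ≤ ε :=
    fun t => hcov _ (huT t) (hW t)
  choose jt hjt using hch
  obtain ⟨j, hjinf'⟩ := Finite.exists_infinite_fiber jt
  have hjinf : Set.Infinite (jt ⁻¹' {j}) := (Set.infinite_coe_iff (s := jt ⁻¹' {j})).mp hjinf'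
  -- support radius
  obtain ⟨R, hR⟩ := hu.2.1.isBounded.subset_closedBall 0
  have hsupp : ∀ (t : ℕ) (x : Fin n → ℝ), x ∈ tsupport (fun y => u (y - c t)) →
      |x i0 - (t : ℝ)| ≤ R := by
    intro t x hx
    have h1 : x - c t ∈ tsupport u := MNC.tsupport_translate_subset u (c t) hx
    have h2 : ‖x - c t‖ ≤ R := by simpa [Metric.mem_closedBall] using hR h1
    have h3 : ‖(x - c t) i0‖ ≤ ‖x - c t‖ := norm_le_pi_norm (x - c t) i0
    have h4 : (x - c t) i0 = x i0 - (t : ℝ) := by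
      simp [hc, Pi.sub_apply, Pi.single_eq_same]
    rw [h4, Real.norm_eq_abs] at h3
    exact h3.trans h2
  set M : ℕ := ⌈2 * R⌉₊ + 1 with hM
  have hMR : (2 : ℝ) * R < M := by
    have := Nat.le_ceil (2 * R)
    push_cast [hM]
    linarith
  obtain ⟨t1, ht1⟩ := hjinf.nonempty
  have ht1j : jt t1 = j := ht1
  have hsel : ∀ m : ℕ, ∃ t ∈ jt ⁻¹' {j}, m + t1 + M < t := fun m =>
    hjinf.exists_gt (m + t1 + M)
  choose tm htmfib htmgt using hsel
  have htmj : ∀ m, jt (tm m) = j := fun m => htmfib m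
  -- the escaping sets
  set E : ℕ → Set (Fin n → ℝ) := fun m => tsupport (fun y => u (y - c (tm m))) with hE
  have hEmeas : ∀ m, MeasurableSet (E m) := fun m => (isClosed_tsupport _).measurableSet
  -- f : the fixed function with finite norm
  set f : (Fin n → ℝ) → ℝ≥0∞ := fun x => ENNReal.ofReal |u (x - c t1) - g j x| with hf
  have hfmeas : Measurable f := by
    apply Measurable.ennreal_ofReal
    exact ((hcu.measurable.comp (measurable_id.sub measurable_const)).sub (hg j)).abs
  have hρf : Y.ρ f ≤ ε := by
    have := hjt t1
    rwa [ht1j] at this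
  -- u (x - c t1) vanishes on E m
  have hzero : ∀ (m : ℕ) (x : Fin n → ℝ), x ∈ E m → u (x - c t1) = 0 := by
    intro m x hx
    by_contra hne
    have hx1 : x ∈ tsupport (fun y => u (y - c t1)) := subset_closure hne
    have b1 := hsupp t1 x hx1
    have b2 := hsupp (tm m) x hx
    have hlt : (t1 : ℝ) + M < tm m := by
      have : t1 + M ≤ m + t1 + M := by omega
      have h5 : t1 + M < tm m := lt_of_le_of_lt this (htmgt m)
      exact_mod_cast h5
    have : (tm m : ℝ) - t1 ≤ 2 * R := by
      have := abs_sub_abs_le_abs_sub (x i0 - (t1:ℝ)) (x i0 - (tm m : ℝ))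
      have h6 : |(tm m : ℝ) - t1| ≤ |x i0 - (t1:ℝ)| + |x i0 - (tm m:ℝ)| := by
        have : (tm m : ℝ) - t1 = (x i0 - t1) - (x i0 - tm m) := by ring
        rw [this]
        exact abs_sub _ _
      have h7 : (tm m : ℝ) - t1 ≤ |(tm m : ℝ) - t1| := le_abs_self _
      linarith
    linarith
  -- a.e. escape
  have hesc : ∀ x : Fin n → ℝ, ∀ᶠ m in atTop, x ∉ E m := by
    intro x
    rw [eventually_atTop]
    refine ⟨⌈x i0 + R⌉₊ + 1, fun m hm hx => ?_⟩
    have b2 := hsupp (tm m) x hx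
    have h8 : (tm m : ℝ) ≤ x i0 + R := by
      have := abs_sub_comm (x i0) ((tm m : ℝ))
      have h9 : (tm m : ℝ) - x i0 ≤ |x i0 - (tm m : ℝ)| := by
        rw [abs_sub_comm]; exact le_abs_self _
      linarith
    have h10 : (m : ℝ) < tm m := by
      have : m ≤ m + t1 + M := by omega
      have := lt_of_le_of_lt this (htmgt m)
      exact_mod_cast this
    have h11 : x i0 + R < m := by
      have hceil := Nat.le_ceil (x i0 + R)
      have : (⌈x i0 + R⌉₊ : ℝ) + 1 ≤ m := by exact_mod_cast hm
      linarith
    linarith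
  -- main estimate for each m
  have hmain : ∀ m : ℕ, Y.ρ (fun x => ENNReal.ofReal |u x|) ≤ ε + Y.ρ ((E m).indicator f) := by
    intro m
    have e0 : Y.ρ (fun x => ENNReal.ofReal |u x|)
        = Y.ρ (fun x => ENNReal.ofReal |u (x - c (tm m))|) :=
      (MNC.rho_translate Y hYri (c (tm m)) (hD (tm m)) _ hFmeas).symm
    rw [e0]
    set F1 : (Fin n → ℝ) → ℝ≥0∞ := fun x => ENNReal.ofReal |u (x - c (tm m)) - g j x| with hF1
    have hF1meas : Measurable F1 := by
      apply Measurable.ennreal_ofReal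
      exact ((hcu.measurable.comp (measurable_id.sub measurable_const)).sub (hg j)).abs
    have hF2meas : Measurable ((E m).indicator f) := hfmeas.indicator (hEmeas m)
    have hptwise : ∀ x, ENNReal.ofReal |u (x - c (tm m))| ≤ (F1 + (E m).indicator f) x := by
      intro x
      by_cases hx : x ∈ E m
      · have hind : (E m).indicator f x = ENNReal.ofReal |g j x| := by
          rw [Set.indicator_of_mem hx, hf]
          simp [hzero m x hx]
        have habs : |u (x - c (tm m))| ≤ |u (x - c (tm m)) - g j x| + |g j x| := by
          have := abs_sub_abs_le_abs_sub (u (x - c (tm m))) (g j x)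
          have h12 := abs_add_le (u (x - c (tm m)) - g j x) (g j x)
          calc |u (x - c (tm m))| = |(u (x - c (tm m)) - g j x) + g j x| := by ring_nf
            _ ≤ _ := h12
        calc ENNReal.ofReal |u (x - c (tm m))|
            ≤ ENNReal.ofReal (|u (x - c (tm m)) - g j x| + |g j x|) :=
              ENNReal.ofReal_le_ofReal habs
          _ = ENNReal.ofReal |u (x - c (tm m)) - g j x| + ENNReal.ofReal |g j x| :=
              ENNReal.ofReal_add (abs_nonneg _) (abs_nonneg _)
          _ = (F1 + (E m).indicator f) x := by rw [Pi.add_apply, hind]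
      · have hz : u (x - c (tm m)) = 0 := by
          by_contra hne
          exact hx (subset_closure hne)
        simp [hz]
    have hstep : Y.ρ (fun x => ENNReal.ofReal |u (x - c (tm m))|)
        ≤ Y.ρ (F1 + (E m).indicator f) := by
      apply Y.mono _ _ (hF1meas.add hF2meas)
        (hcu.measurable.comp (measurable_id.sub measurable_const)).abs.ennreal_ofReal
      exact ae_of_all _ hptwise
    have hadd := Y.add_le F1 ((E m).indicator f) hF1meas hF2meas
    have hF1le : Y.ρ F1 ≤ ε := by
      have := hjt (tm m)
      rwa [htmj m] at this
    calc Y.ρ (fun x => ENNReal.ofReal |u (x - c (tm m))|)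
        ≤ Y.ρ F1 + Y.ρ ((E m).indicator f) := hstep.trans hadd
      _ ≤ ε + Y.ρ ((E m).indicator f) := add_le_add hF1le le_rfl
  -- pass to the limit
  have htend : Tendsto (fun m => Y.ρ ((E m).indicator f)) atTop (𝓝 0) :=
    hYac f hfmeas (lt_of_le_of_lt hρf (lt_top_iff_ne_top.mpr hε)) E hEmeas
      (ae_of_all _ hesc)
  have htend2 : Tendsto (fun m => ε + Y.ρ ((E m).indicator f)) atTop (𝓝 ε) := by
    have := htend.const_add ε
    simpa using this
  exact ge_of_tendsto' htend2 hmain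

/-- Let `D = ℝᵏ × ∏_{i=1}^{n-k} (aᵢ,bᵢ)` be a strip-like domain and let
`X(D)`, `Y(D)` be rearrangement-invariant Banach function spaces over `D` such that the
canonical embedding `I : W₀¹X(D) ↪ Y(D)` is bounded. If `Y(D)` has absolutely continuous
norm, then `e_m(I) = ‖I‖` for every `m`, i.e., `I` is maximally noncompact.
(Since `W₀¹X(D)` is the closure of the set of test functions, the `m`-th entropy number
of `I` and the norm of `I` are expressed through test functions.) -/
theorem riSobolev_embedding_stripDomain_maximally_noncompact
    (n k : ℕ) (hn : 2 ≤ n) (hk1 : 1 ≤ k) (hk : k < n)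
    (a b : Fin n → ℝ) (hab : ∀ i : Fin n, k ≤ (i : ℕ) → a i < b i)
    (X Y : BanachFunctionNorm (Fin n → ℝ)
      ((volume : Measure (Fin n → ℝ)).restrict (stripDomain n k a b)))
    (hXri : X.RearrangementInvariant) (hYri : Y.RearrangementInvariant)
    -- the canonical embedding `W₀¹X(D) ↪ Y(D)` is bounded
    (hbdd : ∃ C : ℝ≥0∞, C < ∞ ∧ ∀ u : (Fin n → ℝ) → ℝ, IsTestFun (stripDomain n k a b) u →
      Y.ρ (fun x => ENNReal.ofReal |u x|) ≤ C * W1Xnorm X u)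
    -- `Y(D)` has absolutely continuous norm
    (hYac : Y.HasAbsolutelyContinuousNorm) :
    ∀ m : ℕ, 1 ≤ m →
      -- the `m`-th entropy number of the embedding ...
      sInf {ε : ℝ≥0∞ | ∃ g : Fin (2 ^ (m - 1)) → ((Fin n → ℝ) → ℝ),
          (∀ j, Measurable (g j)) ∧
          ∀ u : (Fin n → ℝ) → ℝ, IsTestFun (stripDomain n k a b) u → W1Xnorm X u ≤ 1 →
            ∃ j, Y.ρ (fun x => ENNReal.ofReal |u x - g j x|) ≤ ε} =
        -- ... equals the norm of the embedding
        sSup {r : ℝ≥0∞ | ∃ u : (Fin n → ℝ) → ℝ, IsTestFun (stripDomain n k a b) u ∧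
          W1Xnorm X u ≤ 1 ∧ r = Y.ρ (fun x => ENNReal.ofReal |u x|)} := by
  intro m hm
  apply le_antisymm
  · apply sInf_le
    refine ⟨fun _ _ => 0, fun _ => measurable_const, fun u hu h1 => ?_⟩
    have hpos : 0 < 2 ^ (m - 1) := Nat.pow_pos (by norm_num)
    refine ⟨⟨0, hpos⟩, ?_⟩
    have heq : (fun x => ENNReal.ofReal |u x - 0|) = fun x => ENNReal.ofReal |u x| := by
      funext x; rw [sub_zero]
    rw [heq]
    exact le_sSup ⟨u, hu, h1, rfl⟩
  · refine le_sInf fun ε hε => sSup_le fun r hr => ?_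
    obtain ⟨g, hg, hcov⟩ := hε
    obtain ⟨u, hu, hu1, rfl⟩ := hr
    exact MNC.key hk1 hk a b X Y hXri hYri hYac g hg ε hcov u hu hu1

end
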